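/- arXiv:1709.00593 — 2 statements merged into one kernel-verified Lean document; each statement's English description precedes it below -/
import Mathlib

section
/- Let v : ℝ² → ℝ be a harmonic function on all of ℝ² satisfying v(x) ≤ C₁ + C₂ log|x| for all |x| ≥ R₀, for some constants C₁, C₂, R₀ > 0. Then v is constant. -/
/-!
Identify `ℝ²` with `ℂ` isometrically; harmonicity is preserved, so `v` becomes the real part of an
entire function `F`. For `0 < c` with `c * C₂ < 1`, the entire function `exp (c F)` has modulus
`exp (c v) ≤ K ‖z‖ ^ (c C₂)`, which is `o(‖z‖)`. Hence its difference quotient at `0` is entire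
and tends to `0` at infinity, so it vanishes by Liouville's theorem, `exp (c F)` is constant, and
so is `v = Re F`.
-/

open Real Filter Topology Set InnerProductSpace Laplacian

section

variable {E F G : Type*} [NormedAddCommGroup E] [InnerProductSpace ℝ E] [FiniteDimensional ℝ E]
  [NormedAddCommGroup F] [InnerProductSpace ℝ F] [FiniteDimensional ℝ F]
  [NormedAddCommGroup G] [NormedSpace ℝ G]

theorem InnerProductSpace.laplacian_comp_linearIsometryEquiv (g : E ≃ₗᵢ[ℝ] F) (f : F → G)
    (x : E) : Δ (f ∘ g) x = Δ f (g x) := by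
  let b := stdOrthonormalBasis ℝ E
  rw [laplacian_eq_iteratedFDeriv_orthonormalBasis _ b,
    laplacian_eq_iteratedFDeriv_orthonormalBasis f (b.map g)]
  simp only [← iteratedFDerivWithin_univ]
  congr! 1 with i
  have := g.toContinuousLinearEquiv.iteratedFDerivWithin_comp_right f uniqueDiffOn_univ
    (mem_univ (g x)) 2
  simp only [preimage_univ, LinearIsometryEquiv.coe_toContinuousLinearEquiv] at this
  simp only [this, ContinuousMultilinearMap.compContinuousLinearMap_apply,
    OrthonormalBasis.map_apply]
  congr 1
  ext j
  fin_cases j <;> rfl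

theorem InnerProductSpace.HarmonicAt.comp_linearIsometryEquiv {f : F → G} (g : E ≃ₗᵢ[ℝ] F) {x : E}
    (hf : HarmonicAt f (g x)) : HarmonicAt (f ∘ g) x := by
  refine ⟨hf.1.comp x g.contDiff.contDiffAt, ?_⟩
  have := g.continuous.continuousAt.eventually hf.2
  filter_upwards [this] with y hy
  rw [laplacian_comp_linearIsometryEquiv]
  exact hy

theorem InnerProductSpace.HarmonicOnNhd.comp_linearIsometryEquiv {f : F → G} (g : E ≃ₗᵢ[ℝ] F)
    (hf : HarmonicOnNhd f univ) : HarmonicOnNhd (f ∘ g) univ :=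
  fun x _ => (hf (g x) (mem_univ _)).comp_linearIsometryEquiv g

theorem EuclideanSpace.laplacian_eq_sum_iteratedFDeriv_single {ι : Type*} [Fintype ι]
    [DecidableEq ι] (f : EuclideanSpace ℝ ι → G) (x : EuclideanSpace ℝ ι) :
    Δ f x = ∑ i, iteratedFDeriv ℝ 2 f x ![single i 1, single i 1] := by
  simp [laplacian_eq_iteratedFDeriv_orthonormalBasis f (EuclideanSpace.basisFun ι ℝ)]

end

theorem Differentiable.apply_eq_apply_zero_of_tendsto_div {h : ℂ → ℂ} (hh : Differentiable ℂ h)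
    (hlim : Tendsto (fun z => h z / z) (cocompact ℂ) (𝓝 0)) (z : ℂ) : h z = h 0 := by
  have hd : Differentiable ℂ (dslope h 0) := fun w =>
    ((Complex.differentiableOn_dslope univ_mem).2 hh.differentiableOn w
      (mem_univ w)).differentiableAt univ_mem
  have hslope : ∀ w ≠ 0, dslope h 0 w = h w / w - h 0 / w := by
    intro w hw
    rw [dslope_of_ne _ hw, slope_def_field, sub_zero, sub_div]
  have hinv : Tendsto (fun w : ℂ => h 0 / w) (cocompact ℂ) (𝓝 0) := by
    simpa [div_eq_mul_inv, ← Metric.cobounded_eq_cocompact] using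
      (tendsto_inv₀_cobounded (α := ℂ)).const_mul (h 0)
  have h0 : Tendsto (dslope h 0) (cocompact ℂ) (𝓝 0) := by
    have hne : ∀ᶠ w in cocompact ℂ, w ≠ 0 := isCompact_singleton.compl_mem_cocompact
    simpa using (hlim.sub hinv).congr' (hne.mono fun w hw => (hslope w hw).symm)
  rcases eq_or_ne z 0 with rfl | hz
  · rfl
  have := hd.apply_eq_of_tendsto_cocompact z h0
  rw [dslope_of_ne _ hz, slope_def_field, sub_zero, div_eq_zero_iff, sub_eq_zero] at this
  exact this.resolve_right hz

theorem Differentiable.re_apply_eq_re_apply_zero_of_re_le_log {F : ℂ → ℂ}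
    (hF : Differentiable ℂ F) {A B : ℝ}
    (hgrowth : ∀ᶠ z in cocompact ℂ, (F z).re ≤ A + B * Real.log ‖z‖) (z : ℂ) :
    (F z).re = (F 0).re := by
  set c : ℝ := (|B| + 1)⁻¹
  have hc : 0 < c := by positivity
  have hcB : c * B < 1 :=
    calc c * B < c * (|B| + 1) := by gcongr; linarith [le_abs_self B]
      _ = 1 := inv_mul_cancel₀ (by positivity)
  set h : ℂ → ℂ := fun z => Complex.exp (c * F z)
  have hh : Differentiable ℂ h := (hF.const_mul _).cexp
  have hnorm : ∀ z, ‖h z‖ = Real.exp (c * (F z).re) := fun z => by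
    simp [h, Complex.norm_exp]
  have hnorm_pos : ∀ᶠ z : ℂ in cocompact ℂ, 0 < ‖z‖ :=
    tendsto_norm_cocompact_atTop.eventually_gt_atTop 0
  have hexponent : Tendsto (fun z : ℂ => c * A + (c * B - 1) * Real.log ‖z‖) (cocompact ℂ) atBot :=
    tendsto_atBot_add_const_left _ _
      ((tendsto_log_atTop.comp tendsto_norm_cocompact_atTop).const_mul_atTop_of_neg (sub_neg.2 hcB))
  have hlim : Tendsto (fun z => h z / z) (cocompact ℂ) (𝓝 0) := by
    rw [tendsto_zero_iff_norm_tendsto_zero]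
    refine squeeze_zero' (Eventually.of_forall fun _ => norm_nonneg _) ?_
      (tendsto_exp_atBot.comp hexponent)
    filter_upwards [hgrowth, hnorm_pos] with z hz hz0
    have : c * (F z).re ≤ c * (A + B * Real.log ‖z‖) := mul_le_mul_of_nonneg_left hz hc.le
    have hquot : Real.exp (c * (F z).re) / ‖z‖ = Real.exp (c * (F z).re - Real.log ‖z‖) := by
      rw [Real.exp_sub, Real.exp_log hz0]
    rw [norm_div, hnorm, hquot]
    exact Real.exp_le_exp.2 (by linarith)
  have := congrArg (‖·‖) (hh.apply_eq_apply_zero_of_tendsto_div hlim z)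
  rwa [hnorm, hnorm, Real.exp_eq_exp, mul_right_inj' hc.ne'] at this

theorem InnerProductSpace.HarmonicOnNhd.apply_eq_apply_zero_of_le_log {v : ℂ → ℝ}
    (hv : HarmonicOnNhd v univ) {A B : ℝ}
    (hgrowth : ∀ᶠ z in cocompact ℂ, v z ≤ A + B * Real.log ‖z‖) (z : ℂ) : v z = v 0 := by
  obtain ⟨F, hF, rfl⟩ := hv.exists_analyticOnNhd_univ_re_eq
  exact Differentiable.re_apply_eq_re_apply_zero_of_re_le_log
    (fun w => (hF w (mem_univ w)).differentiableAt) hgrowth z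

theorem harmonic_log_growth_const_general (v : EuclideanSpace ℝ (Fin 2) → ℝ)
    (hv : ContDiff ℝ 2 v)
    (hharm : ∀ x, ∑ i : Fin 2,
      iteratedFDeriv ℝ 2 v x ![EuclideanSpace.single i 1, EuclideanSpace.single i 1] = 0)
    (C₁ C₂ R₀ : ℝ)
    (hgrowth : ∀ x : EuclideanSpace ℝ (Fin 2), R₀ ≤ ‖x‖ → v x ≤ C₁ + C₂ * Real.log ‖x‖) :
    ∃ c : ℝ, ∀ x, v x = c := by
  have hv_harm : HarmonicOnNhd v univ := fun x _ =>
    ⟨hv.contDiffAt, Eventually.of_forall fun y => by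
      simpa [EuclideanSpace.laplacian_eq_sum_iteratedFDeriv_single] using hharm y⟩
  let T : ℂ ≃ₗᵢ[ℝ] EuclideanSpace ℝ (Fin 2) := Complex.orthonormalBasisOneI.repr
  have hgrowth' : ∀ᶠ z in cocompact ℂ, (v ∘ T) z ≤ C₁ + C₂ * Real.log ‖z‖ := by
    filter_upwards [tendsto_norm_cocompact_atTop.eventually_ge_atTop R₀] with z hz
    simpa only [Function.comp_apply, T.norm_map] using hgrowth (T z) (by rwa [T.norm_map])
  refine ⟨v (T 0), fun x => ?_⟩
  simpa using (hv_harm.comp_linearIsometryEquiv T).apply_eq_apply_zero_of_le_log hgrowth' (T.symm x)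

/-- Liouville-type theorem: a harmonic function on ℝ² with at most logarithmic
growth from above is constant. -/
theorem harmonic_log_growth_const (v : EuclideanSpace ℝ (Fin 2) → ℝ)
    (hv : ContDiff ℝ 2 v)
    (hharm : ∀ x, ∑ i : Fin 2,
      iteratedFDeriv ℝ 2 v x ![EuclideanSpace.single i 1, EuclideanSpace.single i 1] = 0)
    (C₁ C₂ R₀ : ℝ) (hC₁ : 0 < C₁) (hC₂ : 0 < C₂) (hR₀ : 0 < R₀)
    (hgrowth : ∀ x : EuclideanSpace ℝ (Fin 2), R₀ ≤ ‖x‖ → v x ≤ C₁ + C₂ * Real.log ‖x‖) :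
    ∃ c : ℝ, ∀ x, v x = c :=
  harmonic_log_growth_const_general v hv hharm C₁ C₂ R₀ hgrowth
end

section
/- Fix q > 4 and suppose there exist constants ε(q) > 0 and C(q) > 0 with the following property: for every pair (u, ψ) with ψ ∈ L⁴(B₁) a weak solution of Dψ = −e^u ψ in B₁ and ∫_{B₁} e^{2u} ≤ ε(q), one has ‖ψ‖_{L^q(B_{1/2})} ≤ C(q)‖ψ‖_{L⁴(B₁)}. Further assume the equation and the hypotheses are invariant under the scaling u_r(x) = u(rx) + log r, ψ_r(x) = r^{1/2} ψ(rx), with ∫_{B₁} e^{2u_r} = ∫_{B_r} e^{2u} and ‖ψ_r‖_{L^q(B_{1/2})} = r^{(q−4)/(2q)} ‖ψ‖_{L^q(B_{r/2})}. Then for any (u, ψ) defined on all of ℝ² with ∫_{ℝ²} e^{2u} ≤ ε(q)/2 and ψ ∈ L⁴(ℝ²) solving Dψ = −e^u ψ weakly on ℝ², one has ψ ≡ 0. -/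
/-!
The rescaled pair `(u_r, ψ_r)` solves the equation on the unit disk, has energy at most
`∫_{B_r} e^{2u} ≤ ε`, and `‖ψ_r‖_{L⁴(B_1)} ≤ ‖ψ‖_{L⁴(ℝ²)}` because the L⁴ norm is invariant under
the conformal scaling in dimension two. The ε-regularity estimate for `(u_r, ψ_r)` therefore reads
`r^{(q-4)/(2q)} ‖ψ‖_{L^q(B_{r/2})} ≤ C ‖ψ‖_{L⁴(ℝ²)}`; since `q > 4`, letting `r → ∞` kills the
L^q norm of `ψ` on every disk.
-/

open MeasureTheory Real Metric

/-- Spinors on ℝ² (a rank-2 complex vector bundle over ℝ², trivialized). -/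
abbrev Spin2 := EuclideanSpace ℂ (Fin 2)

abbrev E2 := EuclideanSpace ℝ (Fin 2)

open Filter Topology Module
open scoped ENNReal

section Scaling

variable {E F : Type*} [NormedAddCommGroup E] [NormedSpace ℝ E] [MeasurableSpace E] [BorelSpace E]
  [FiniteDimensional ℝ E] (μ : Measure E) [μ.IsAddHaarMeasure] [NormedAddCommGroup F] {r : ℝ}

theorem eLpNorm_comp_smul (f : E → F) (hr : r ≠ 0) (p : ℝ≥0∞) :
    eLpNorm (fun x => f (r • x)) p μ =
      ENNReal.ofReal |(r ^ finrank ℝ E)⁻¹| ^ (1 / p).toReal * eLpNorm f p μ := by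
  have hc : ENNReal.ofReal |(r ^ finrank ℝ E)⁻¹| ≠ 0 := by
    simpa using pow_pos (abs_pos.2 hr) _
  rw [← smul_eq_mul, ← eLpNorm_smul_measure_of_ne_zero hc, ← Measure.map_addHaar_smul μ hr,
    (measurableEmbedding_const_smul₀ hr).eLpNorm_map_measure]
  rfl

theorem MeasureTheory.MemLp.comp_smul {f : E → F} {p : ℝ≥0∞} (hf : MemLp f p μ) (hr : r ≠ 0) :
    MemLp (fun x => f (r • x)) p μ := by
  refine (measurableEmbedding_const_smul₀ hr).memLp_map_measure_iff.1 ?_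
  rw [Measure.map_addHaar_smul μ hr]
  exact hf.smul_measure ENNReal.ofReal_ne_top

end Scaling

section ConformalL4

variable {F : Type*} [NormedAddCommGroup F] [NormedSpace ℂ F] {r : ℝ}

theorem eLpNorm_four_sqrt_smul_comp_smul (ψ : E2 → F) (hr : 0 < r) :
    eLpNorm (fun x => (√r : ℂ) • ψ (r • x)) 4 volume = eLpNorm ψ 4 volume := by
  have hscale : ‖(√r : ℂ)‖ₑ * ENNReal.ofReal |(r ^ finrank ℝ E2)⁻¹| ^ (1 / (4 : ℝ≥0∞)).toReal
      = 1 := by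
    have hroot : √r * ((r ^ 2)⁻¹) ^ (1 / 4 : ℝ) = 1 := by
      rw [Real.sqrt_eq_rpow, Real.inv_rpow (by positivity), ← Real.rpow_natCast,
        ← Real.rpow_mul hr.le, ← Real.rpow_neg_one, ← Real.rpow_mul hr.le, ← Real.rpow_add hr]
      norm_num
    rw [finrank_euclideanSpace_fin, abs_of_pos (by positivity), ← ofReal_norm,
      Complex.norm_real, Real.norm_of_nonneg (Real.sqrt_nonneg r),
      ENNReal.ofReal_rpow_of_pos (by positivity), ← ENNReal.ofReal_mul (Real.sqrt_nonneg r),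
      show (1 / (4 : ℝ≥0∞)).toReal = 1 / 4 by norm_num, hroot, ENNReal.ofReal_one]
  change eLpNorm ((√r : ℂ) • fun x => ψ (r • x)) 4 volume = _
  rw [eLpNorm_const_smul, eLpNorm_comp_smul volume ψ hr.ne', ← mul_assoc,
    hscale, one_mul]

theorem MeasureTheory.MemLp.sqrt_smul_comp_smul {ψ : E2 → F} (hψ : MemLp ψ 4 volume) (hr : 0 < r) :
    MemLp (fun x => (√r : ℂ) • ψ (r • x)) 4 volume :=
  (hψ.comp_smul volume hr.ne').const_smul _

end ConformalL4

theorem ENNReal.eq_zero_of_rpow_mul_le {N M : ℝ≥0∞} (hM : M ≠ ∞) {α : ℝ} (hα : 0 < α)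
    (h : ∀ᶠ r in atTop, ENNReal.ofReal (r ^ α) * N ≤ M) : N = 0 := by
  by_contra hN
  have hgrow : Tendsto (fun r : ℝ => ENNReal.ofReal (r ^ α) * N) atTop (𝓝 ∞) := by
    rw [← ENNReal.top_mul hN]
    exact ENNReal.Tendsto.mul_const (ENNReal.tendsto_ofReal_atTop.comp (tendsto_rpow_atTop hα))
      (Or.inl ENNReal.top_ne_zero)
  obtain ⟨r, hle, hgt⟩ := (h.and (hgrow.eventually (lt_mem_nhds hM.lt_top))).exists
  exact (hle.trans_lt hgt).false

theorem dirac_energy_gap_general (q : ℝ) (hq : 4 < q) (ε C : ℝ)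
    (WeakSolOn : (E2 → ℝ) → (E2 → Spin2) → Set E2 → Prop)
    -- ε-regularity: the local L^q estimate on the unit disk
    (h_local : ∀ (u : E2 → ℝ) (ψ : E2 → Spin2),
      WeakSolOn u ψ (ball 0 1) →
      MemLp ψ 4 (volume.restrict (ball (0:E2) 1)) →
      (∫ x in ball (0:E2) 1, Real.exp (2 * u x)) ≤ ε →
      eLpNorm ψ (ENNReal.ofReal q) (volume.restrict (ball (0:E2) (1/2))) ≤
        ENNReal.ofReal C * eLpNorm ψ 4 (volume.restrict (ball (0:E2) 1)))
    -- conformal scaling invariance of the equation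
    (h_scale : ∀ (u : E2 → ℝ) (ψ : E2 → Spin2) (r : ℝ), 0 < r →
      WeakSolOn u ψ Set.univ →
      WeakSolOn (fun x => u (r • x) + Real.log r)
        (fun x => (Real.sqrt r : ℂ) • ψ (r • x)) (ball 0 1))
    -- scaling identity for the energy
    (h_int_scale : ∀ (u : E2 → ℝ) (r : ℝ), 0 < r →
      (∫ x in ball (0:E2) 1, Real.exp (2 * (u (r • x) + Real.log r))) =
        ∫ x in ball (0:E2) r, Real.exp (2 * u x))
    -- scaling identity for the L^q norm
    (h_norm_scale : ∀ (ψ : E2 → Spin2) (r : ℝ), 0 < r →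
      eLpNorm (fun x => (Real.sqrt r : ℂ) • ψ (r • x)) (ENNReal.ofReal q)
          (volume.restrict (ball (0:E2) (1/2))) =
        ENNReal.ofReal (r ^ ((q - 4) / (2 * q))) *
          eLpNorm ψ (ENNReal.ofReal q) (volume.restrict (ball (0:E2) (r/2))))
    (u : E2 → ℝ) (ψ : E2 → Spin2)
    (hsol : WeakSolOn u ψ Set.univ)
    (henergy : (∫ x : E2, Real.exp (2 * u x)) ≤ ε / 2)
    (henergy' : Integrable (fun x : E2 => Real.exp (2 * u x)))
    (hL4 : MemLp ψ 4 (volume : Measure E2)) :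
    ψ =ᵐ[(volume : Measure E2)] 0 := by
  have hα : 0 < (q - 4) / (2 * q) := div_pos (by linarith) (by linarith)
  have hscaled : ∀ r : ℝ, 0 < r →
      ENNReal.ofReal (r ^ ((q - 4) / (2 * q))) *
          eLpNorm ψ (ENNReal.ofReal q) (volume.restrict (ball 0 (r / 2))) ≤
        ENNReal.ofReal C * eLpNorm ψ 4 volume := by
    intro r hr
    have henergy_r : (∫ x in ball (0:E2) 1, Real.exp (2 * (u (r • x) + Real.log r))) ≤ ε := by
      have hball_le : (∫ x in ball (0:E2) r, Real.exp (2 * u x)) ≤ ∫ x, Real.exp (2 * u x) :=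
        setIntegral_le_integral henergy' (.of_forall fun x => (Real.exp_pos _).le)
      have hnonneg : 0 ≤ ∫ x : E2, Real.exp (2 * u x) :=
        integral_nonneg fun x => (Real.exp_pos _).le
      rw [h_int_scale u r hr]
      linarith
    rw [← h_norm_scale ψ r hr]
    calc _ ≤ ENNReal.ofReal C * eLpNorm (fun x => (√r : ℂ) • ψ (r • x)) 4
          (volume.restrict (ball 0 1)) :=
          h_local _ _ (h_scale u ψ r hr hsol) ((hL4.sqrt_smul_comp_smul hr).restrict _) henergy_r
      _ ≤ ENNReal.ofReal C * eLpNorm ψ 4 volume := by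
          rw [← eLpNorm_four_sqrt_smul_comp_smul ψ hr]
          gcongr
          exact Measure.restrict_le_self
  have hball : ∀ n : ℕ, eLpNorm ψ (ENNReal.ofReal q) (volume.restrict (ball 0 n)) = 0 := by
    intro n
    refine ENNReal.eq_zero_of_rpow_mul_le (M := ENNReal.ofReal C * eLpNorm ψ 4 volume)
      (ENNReal.mul_ne_top ENNReal.ofReal_ne_top hL4.eLpNorm_ne_top) hα ?_
    filter_upwards [eventually_gt_atTop (2 * n : ℝ)] with r hr
    refine le_trans ?_ (hscaled r ((by positivity : (0:ℝ) ≤ 2 * n).trans_lt hr))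
    gcongr
    linarith
  have hq0 : ENNReal.ofReal q ≠ 0 := (ENNReal.ofReal_pos.2 (by linarith)).ne'
  rw [← Measure.restrict_univ (μ := volume), ← iUnion_ball_nat 0]
  exact (ae_restrict_iUnion_iff _ _).2 fun n =>
    (eLpNorm_eq_zero_iff hL4.1.restrict hq0).1 (hball n)

/-- Energy gap for the Dirac equation Dψ = −e^u ψ on ℝ²: given the ε-regularity
estimate on the unit disk and the conformal scaling invariance of the equation
(with the associated scaling identities for the energy and the L^q norms),
any solution on all of ℝ² with small energy ∫ e^{2u} ≤ ε(q)/2 and ψ ∈ L⁴(ℝ²)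
vanishes identically. -/
theorem dirac_energy_gap (q : ℝ) (hq : 4 < q) (ε C : ℝ) (hε : 0 < ε) (hC : 0 < C)
    (WeakSolOn : (E2 → ℝ) → (E2 → Spin2) → Set E2 → Prop)
    -- ε-regularity: the local L^q estimate on the unit disk
    (h_local : ∀ (u : E2 → ℝ) (ψ : E2 → Spin2),
      WeakSolOn u ψ (ball 0 1) →
      MemLp ψ 4 (volume.restrict (ball (0:E2) 1)) →
      (∫ x in ball (0:E2) 1, Real.exp (2 * u x)) ≤ ε →
      eLpNorm ψ (ENNReal.ofReal q) (volume.restrict (ball (0:E2) (1/2))) ≤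
        ENNReal.ofReal C * eLpNorm ψ 4 (volume.restrict (ball (0:E2) 1)))
    -- conformal scaling invariance of the equation
    (h_scale : ∀ (u : E2 → ℝ) (ψ : E2 → Spin2) (r : ℝ), 0 < r →
      WeakSolOn u ψ Set.univ →
      WeakSolOn (fun x => u (r • x) + Real.log r)
        (fun x => (Real.sqrt r : ℂ) • ψ (r • x)) (ball 0 1))
    -- scaling identity for the energy
    (h_int_scale : ∀ (u : E2 → ℝ) (r : ℝ), 0 < r →
      (∫ x in ball (0:E2) 1, Real.exp (2 * (u (r • x) + Real.log r))) =
        ∫ x in ball (0:E2) r, Real.exp (2 * u x))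
    -- scaling identity for the L^q norm
    (h_norm_scale : ∀ (ψ : E2 → Spin2) (r : ℝ), 0 < r →
      eLpNorm (fun x => (Real.sqrt r : ℂ) • ψ (r • x)) (ENNReal.ofReal q)
          (volume.restrict (ball (0:E2) (1/2))) =
        ENNReal.ofReal (r ^ ((q - 4) / (2 * q))) *
          eLpNorm ψ (ENNReal.ofReal q) (volume.restrict (ball (0:E2) (r/2))))
    (u : E2 → ℝ) (ψ : E2 → Spin2)
    (hsol : WeakSolOn u ψ Set.univ)
    (henergy : (∫ x : E2, Real.exp (2 * u x)) ≤ ε / 2)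
    (henergy' : Integrable (fun x : E2 => Real.exp (2 * u x)))
    (hL4 : MemLp ψ 4 (volume : Measure E2)) :
    ψ =ᵐ[(volume : Measure E2)] 0 :=
  dirac_energy_gap_general q hq ε C WeakSolOn h_local h_scale h_int_scale h_norm_scale u ψ hsol
    henergy henergy' hL4
end
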